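/- Complex-place conductor bound (core of Lemma 26): Let ν₁, ν₂ ∈ ℂ with |Re(ν₁)| ≤ 1/2 and |Re(ν₂)| ≤ 1/2, and k₁, k₂ ∈ ℤ. Then (1 + |ν₂ - ν₁ + |k₂ - k₁|/2|)² ≤ 9·(1 + |ν₁ + |k₁|/2|)²·(1 + |ν₂ + |k₂|/2|)². -/

import Mathlib

/-!
Put `a = |k₁|/2`, `b = |k₂|/2`, `c = |k₂ - k₁|/2`. Then
`ν₂ - ν₁ + c = (ν₂ + b) - (ν₁ + a) + (c - b + a)` with `0 ≤ c - b + a ≤ 2a`, and `Re ν₁ ≥ -1/2`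
gives `a ≤ ‖ν₁ + a‖ + 1/2`. Hence, with `A = ‖ν₁ + a‖` and `B = ‖ν₂ + b‖`,
`1 + ‖ν₂ - ν₁ + c‖ ≤ 2 + 3A + B ≤ 3(1 + A)(1 + B)`.
-/

namespace Complex

lemma le_norm_add_ofReal_add_half {ν : ℂ} (hν : -(1 / 2) ≤ ν.re) (x : ℝ) :
    x ≤ ‖ν + x‖ + 1 / 2 := by
  have h := re_le_norm (ν + x)
  rw [add_re, ofReal_re] at h
  linarith

lemma norm_sub_add_abs_sub_half_le {ν₁ : ℂ} (hν₁ : -(1 / 2) ≤ ν₁.re) (ν₂ : ℂ) (x₁ x₂ : ℝ) :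
    ‖ν₂ - ν₁ + ((|x₂ - x₁| / 2 : ℝ) : ℂ)‖ ≤
      ‖ν₂ + ((|x₂| / 2 : ℝ) : ℂ)‖ + 3 * ‖ν₁ + ((|x₁| / 2 : ℝ) : ℂ)‖ + 1 := by
  set d : ℝ := (|x₂ - x₁| - |x₂| + |x₁|) / 2 with hd
  have hd_nonneg : 0 ≤ d := by rw [hd]; linarith [abs_sub_abs_le_abs_sub x₂ x₁]
  have hd_le : d ≤ 2 * (|x₁| / 2) := by rw [hd]; linarith [abs_sub x₂ x₁]
  have ha := le_norm_add_ofReal_add_half hν₁ (|x₁| / 2)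
  have hsplit : ν₂ - ν₁ + ((|x₂ - x₁| / 2 : ℝ) : ℂ) =
      (ν₂ + ((|x₂| / 2 : ℝ) : ℂ)) - (ν₁ + ((|x₁| / 2 : ℝ) : ℂ)) + (d : ℂ) := by
    push_cast [hd]
    ring
  calc ‖ν₂ - ν₁ + ((|x₂ - x₁| / 2 : ℝ) : ℂ)‖
      ≤ ‖ν₂ + ((|x₂| / 2 : ℝ) : ℂ)‖ + ‖ν₁ + ((|x₁| / 2 : ℝ) : ℂ)‖ + ‖(d : ℂ)‖ := by
        rw [hsplit]
        exact (norm_add_le _ _).trans (by gcongr; exact norm_sub_le _ _)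
    _ ≤ _ := by
        rw [Complex.norm_of_nonneg hd_nonneg]
        linarith

end Complex

theorem stmt_10_general (ν₁ ν₂ : ℂ) (h₁ : |ν₁.re| ≤ 1 / 2)
    (k₁ k₂ : ℤ) :
    (1 + ‖ν₂ - ν₁ + ((|k₂ - k₁| : ℝ) / 2 : ℝ)‖) ^ 2 ≤
      9 * (1 + ‖ν₁ + ((|k₁| : ℝ) / 2 : ℝ)‖) ^ 2 *
        (1 + ‖ν₂ + ((|k₂| : ℝ) / 2 : ℝ)‖) ^ 2 := by
  have hL := Complex.norm_sub_add_abs_sub_half_le (abs_le.mp h₁).1 ν₂ k₁ k₂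
  set A := ‖ν₁ + ((|k₁| : ℝ) / 2 : ℝ)‖
  set B := ‖ν₂ + ((|k₂| : ℝ) / 2 : ℝ)‖
  have hA : 0 ≤ A := norm_nonneg _
  have hB : 0 ≤ B := norm_nonneg _
  calc (1 + ‖ν₂ - ν₁ + ((|k₂ - k₁| : ℝ) / 2 : ℝ)‖) ^ 2
      ≤ (3 * (1 + A) * (1 + B)) ^ 2 := by
        gcongr
        nlinarith [mul_nonneg hA hB]
    _ = 9 * (1 + A) ^ 2 * (1 + B) ^ 2 := by ring

/-- Core of Lemma 26 (complex place): with Jacquet–Shalika bounds on `Re ν_i`,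
`C_v(χ_v) ≤ 9 C_v(σ_1)C_v(σ_2)`. -/
theorem stmt_10 (ν₁ ν₂ : ℂ) (h₁ : |ν₁.re| ≤ 1 / 2) (h₂ : |ν₂.re| ≤ 1 / 2)
    (k₁ k₂ : ℤ) :
    (1 + ‖ν₂ - ν₁ + ((|k₂ - k₁| : ℝ) / 2 : ℝ)‖) ^ 2 ≤
      9 * (1 + ‖ν₁ + ((|k₁| : ℝ) / 2 : ℝ)‖) ^ 2 *
        (1 + ‖ν₂ + ((|k₂| : ℝ) / 2 : ℝ)‖) ^ 2 :=
  stmt_10_general ν₁ ν₂ h₁ k₁ k₂
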